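/- arXiv:2107.07963 — 2 statements merged into one kernel-verified Lean document; each statement's English description precedes it below -/
import Mathlib

section
/- Let γ > 0, β > 0, and for each n ∈ ℕ with n > γ set α_n = 1 − γ/n. Fix u > 0. Then (1/n²)·(β/(1−α_n))·( ⌊nu⌋ − α_n·(1−α_n^{⌊nu⌋})/(1−α_n) ) converges, as n → ∞, to C_W(u) = β·γ^{-2}·(γu + e^{-γu} − 1). -/
/-!
With `α_n = 1 - γ/n` and `k_n = ⌊n u⌋`, we have `1 - α_n = γ/n`, so the normalized expression equals
`(β/γ) (k_n/n) - (β/γ²) α_n (1 - α_n ^ k_n)`. Since `k_n/n → u`, `α_n → 1` and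
`α_n ^ k_n = exp ((k_n/n) · n log α_n) → exp (-γ u)`, the limit is
`β u/γ - β (1 - e^{-γu})/γ²`.
-/

open Filter Topology Real

lemma tendsto_nat_floor_mul_div_natCast {u : ℝ} (hu : 0 ≤ u) :
    Tendsto (fun n : ℕ ↦ (⌊(n : ℝ) * u⌋₊ : ℝ) / n) atTop (𝓝 u) :=
  ((tendsto_nat_floor_mul_div_atTop hu).comp tendsto_natCast_atTop_atTop).congr
    fun n ↦ by simp [mul_comm]

lemma tendsto_one_add_pow_exp_of_tendsto_mul {g : ℕ → ℝ} {k : ℕ → ℕ} {t c : ℝ}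
    (hg : Tendsto (fun n ↦ n * g n) atTop (𝓝 t))
    (hk : Tendsto (fun n ↦ (k n : ℝ) / n) atTop (𝓝 c)) :
    Tendsto (fun n ↦ (1 + g n) ^ k n) atTop (𝓝 (exp (c * t))) := by
  have hg0 : Tendsto g atTop (𝓝 0) := by
    have h := hg.mul (tendsto_one_div_atTop_nhds_zero_nat (𝕜 := ℝ))
    rw [mul_zero] at h
    refine h.congr' ?_
    filter_upwards [eventually_ne_atTop 0] with n hn
    field_simp
  have hexp := (continuous_exp.tendsto _).comp
    (hk.mul (Real.tendsto_nat_mul_log_one_add_of_tendsto hg))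
  refine hexp.congr' ?_
  filter_upwards [eventually_ne_atTop 0, hg0.eventually (eventually_gt_nhds neg_one_lt_zero)]
    with n hn hpos
  have hcancel : (k n : ℝ) / n * (n * log (1 + g n)) = k n * log (1 + g n) := by field_simp
  rw [Function.comp_apply, hcancel, exp_nat_mul, exp_log (by linarith)]

theorem stmt4_general (γ β u : ℝ) (hγ : 0 < γ) (hu : 0 < u) :
    Filter.Tendsto (fun n : ℕ =>
      (1 / (n : ℝ) ^ 2) * (β / (1 - (1 - γ / n))) *
        ((⌊(n : ℝ) * u⌋₊ : ℝ) -
          (1 - γ / n) * (1 - (1 - γ / n) ^ ⌊(n : ℝ) * u⌋₊) / (1 - (1 - γ / n))))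
      Filter.atTop (nhds (β * γ⁻¹ ^ 2 * (γ * u + Real.exp (-γ * u) - 1))) := by
  have hk := tendsto_nat_floor_mul_div_natCast hu.le
  have hγn : Tendsto (fun n : ℕ ↦ n * (-γ / n)) atTop (𝓝 (-γ)) :=
    tendsto_const_nhds.congr' <| by
      filter_upwards [eventually_ne_atTop 0] with n hn
      field_simp
  have hpow : Tendsto (fun n : ℕ ↦ (1 - γ / n) ^ ⌊(n : ℝ) * u⌋₊) atTop
      (𝓝 (exp (-γ * u))) := by
    simpa [mul_comm u, neg_div, ← sub_eq_add_neg] using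
      tendsto_one_add_pow_exp_of_tendsto_mul hγn hk
  have hα : Tendsto (fun n : ℕ ↦ 1 - γ / n) atTop (𝓝 1) := by
    simpa using tendsto_const_nhds.sub (tendsto_const_div_atTop_nhds_zero_nat γ)
  have hlim := (hk.const_mul (β / γ)).sub
    ((hα.mul ((tendsto_const_nhds (x := 1)).sub hpow)).const_mul (β / γ ^ 2))
  convert hlim.congr' ?_ using 2
  · field_simp
    ring
  · filter_upwards [eventually_ne_atTop 0] with n hn
    field_simp [hγ.ne']
    ring

theorem stmt4 (γ β u : ℝ) (hγ : 0 < γ) (hβ : 0 < β) (hu : 0 < u) :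
    Filter.Tendsto (fun n : ℕ =>
      (1 / (n : ℝ) ^ 2) * (β / (1 - (1 - γ / n))) *
        ((⌊(n : ℝ) * u⌋₊ : ℝ) -
          (1 - γ / n) * (1 - (1 - γ / n) ^ ⌊(n : ℝ) * u⌋₊) / (1 - (1 - γ / n))))
      Filter.atTop (nhds (β * γ⁻¹ ^ 2 * (γ * u + Real.exp (-γ * u) - 1))) :=
  stmt4_general γ β u hγ hu
end

section
/- Let γ > 0, x > 0, β > 0, and for n large set α_n = 1 − γ/n and let x_n → x with x_n > 0. Let φ_n(t) = exp( −i·t·√n·x_n + (β + α_n·n·x_n)·(e^{it/√n} − 1) ) for t ∈ ℝ. Then φ_n(t) → exp(−x·t²/2) for every t ∈ ℝ as n → ∞. -/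
/-!
With `s = √n` and `z = it/s`, the exponent equals
`(β - γ xₙ)(eᶻ - 1) + xₙ · s²(eᶻ - 1 - z)`: the drift `-it√n·xₙ` cancels the first-order part
`n xₙ z` of the Poisson term. The first summand tends to `0`, and by the second-order Taylor
expansion of `exp`, `s²(e^{a/s} - 1 - a/s) → a²/2 = -t²/2` for `a = it`.
-/

open Filter Topology Complex Asymptotics

lemma tendsto_div_ofReal_atTop_zero (a : ℂ) :
    Tendsto (fun s : ℝ => a / (s : ℂ)) atTop (𝓝 0) := by
  have h : Tendsto (fun s : ℝ => ((s⁻¹ : ℝ) : ℂ)) atTop (𝓝 0) :=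
    ofReal_zero ▸ (continuous_ofReal.tendsto 0).comp tendsto_inv_atTop_zero
  simpa [div_eq_mul_inv] using h.const_mul a

lemma tendsto_sq_mul_exp_div_sub_one_sub (a : ℂ) :
    Tendsto (fun s : ℝ => (s : ℂ) ^ 2 * (exp (a / s) - 1 - a / s)) atTop (𝓝 (a ^ 2 / 2)) := by
  have hremainder : (fun s : ℝ => exp (a / s) - ∑ i ∈ Finset.range 3, (a / s) ^ i / i.factorial)
      =O[atTop] fun s : ℝ => (a / s) ^ 3 :=
    (exp_sub_sum_range_isBigO_pow 3).comp_tendsto (tendsto_div_ofReal_atTop_zero a)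
  have hcubic : Tendsto (fun s : ℝ => (s : ℂ) ^ 2 * (a / s) ^ 3) atTop (𝓝 0) := by
    refine (tendsto_div_ofReal_atTop_zero (a ^ 3)).congr' ?_
    filter_upwards [eventually_ne_atTop 0] with s hs
    field_simp
  have hsmall := ((isBigO_refl (fun s : ℝ => (s : ℂ) ^ 2) atTop).mul hremainder).trans_tendsto
    hcubic
  rw [← zero_add (a ^ 2 / 2)]
  refine (hsmall.add_const (a ^ 2 / 2)).congr' ?_
  filter_upwards [eventually_ne_atTop 0] with s hs
  have hs' : (s : ℂ) ≠ 0 := ofReal_ne_zero.mpr hs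
  simp only [Finset.sum_range_succ, Finset.sum_range_zero]
  field_simp
  ring

lemma tendsto_centered_poisson_exponent {ι : Type*} {l : Filter ι} {s y : ι → ℝ} {x : ℝ}
    (hs : Tendsto s l atTop) (hy : Tendsto y l (𝓝 x)) (a β γ : ℂ) :
    Tendsto (fun i => -a * s i * y i + (β + (1 - γ / s i ^ 2) * s i ^ 2 * y i) *
      (exp (a / s i) - 1)) l (𝓝 (x * (a ^ 2 / 2))) := by
  have hy' : Tendsto (fun i => (y i : ℂ)) l (𝓝 x) := (continuous_ofReal.tendsto x).comp hy
  have hfirst : Tendsto (fun i => exp (a / s i) - 1) l (𝓝 0) := by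
    have := ((continuous_exp.tendsto 0).comp (tendsto_div_ofReal_atTop_zero a)).comp hs
    simpa using this.sub_const 1
  have hlim := ((tendsto_const_nhds (x := β)).sub (hy'.const_mul γ)).mul hfirst |>.add
    (hy'.mul ((tendsto_sq_mul_exp_div_sub_one_sub a).comp hs))
  rw [mul_zero, zero_add] at hlim
  refine hlim.congr' ?_
  filter_upwards [hs.eventually_ne_atTop 0] with i hi
  have hi' : (s i : ℂ) ≠ 0 := ofReal_ne_zero.mpr hi
  simp only [Function.comp_apply]
  field_simp
  ring

theorem stmt7_general (γ x β : ℝ)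
    (xseq : ℕ → ℝ)
    (hlim : Filter.Tendsto xseq Filter.atTop (nhds x)) (t : ℝ) :
    Filter.Tendsto (fun n : ℕ =>
      Complex.exp (-Complex.I * (t : ℂ) * (Real.sqrt n : ℂ) * (xseq n : ℂ)
        + ((β + (1 - γ / (n : ℝ)) * (n : ℝ) * xseq n : ℝ) : ℂ)
          * (Complex.exp (Complex.I * (t : ℂ) / (Real.sqrt n : ℂ)) - 1)))
      Filter.atTop (nhds (Complex.exp (-((x * t ^ 2 / 2 : ℝ) : ℂ)))) := by
  have hsqrt : Tendsto (fun n : ℕ => √(n : ℝ)) atTop atTop :=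
    Real.tendsto_sqrt_atTop.comp tendsto_natCast_atTop_atTop
  have hexponent := tendsto_centered_poisson_exponent hsqrt hlim (I * t) β γ
  convert hexponent.cexp using 3 with n
  · push_cast
    rw [← ofReal_pow, Real.sq_sqrt n.cast_nonneg, ofReal_natCast]
    ring
  · push_cast
    rw [mul_pow, I_sq]
    ring

theorem stmt7 (γ x β : ℝ) (hγ : 0 < γ) (hx : 0 < x) (hβ : 0 < β)
    (xseq : ℕ → ℝ) (hpos : ∀ n, 0 < xseq n)
    (hlim : Filter.Tendsto xseq Filter.atTop (nhds x)) (t : ℝ) :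
    Filter.Tendsto (fun n : ℕ =>
      Complex.exp (-Complex.I * (t : ℂ) * (Real.sqrt n : ℂ) * (xseq n : ℂ)
        + ((β + (1 - γ / (n : ℝ)) * (n : ℝ) * xseq n : ℝ) : ℂ)
          * (Complex.exp (Complex.I * (t : ℂ) / (Real.sqrt n : ℂ)) - 1)))
      Filter.atTop (nhds (Complex.exp (-((x * t ^ 2 / 2 : ℝ) : ℂ)))) :=
  stmt7_general γ x β xseq hlim t
end
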